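/- arXiv:1805.10452 — 5 statements merged into one kernel-verified Lean document; each statement's English description precedes it below -/
import Mathlib

section
/- Let F be a finite field of characteristic p and order q, and let d be an invertible exponent over F. For every a ∈ F, |W_{F,d}(a)| = q if and only if d is degenerate over F and a = 1; in all other cases |W_{F,d}(a)| < q. -/
open scoped BigOperators

/-- The canonical additive character of a finite field `F` of characteristic `p`:
`ψ(x) = exp(2πi·Tr(x)/p)`, where `Tr` is the absolute trace from `F` to `𝔽_p = ZMod p`. -/
noncomputable def canonicalPsi (F : Type*) [Field F] [Fintype F] (p : ℕ) [CharP F p]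
    (x : F) : ℂ :=
  letI : Algebra (ZMod p) F := ZMod.algebra F p
  Complex.exp (2 * Real.pi * Complex.I * ((Algebra.trace (ZMod p) F x).val : ℂ) / (p : ℂ))

/-- The Weil sum `W_{F,d}(a) = ∑_{x ∈ F} ψ(x^d − a·x)`. -/
noncomputable def weilSum (F : Type*) [Field F] [Fintype F] (p : ℕ) [CharP F p]
    (d : ℕ) (a : F) : ℂ :=
  ∑ x : F, canonicalPsi F p (x ^ d - a * x)

/-!
The terms `ψ(x^d - a x)` are unit complex numbers and the term at `x = 0` is `1`, so by strict
convexity `|W(a)| = q` exactly when every term is `1`, i.e. when `Tr(x^d - a x) = 0` for all `x`.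
Expanding the trace as `∑_{i<n} (x^(d p^i) - a^(p^i) x^(p^i))` gives a linear relation between the
characters `u ↦ u^(d p^i)` and `u ↦ u^(p^i)` of `Fˣ`; when `d` is nondegenerate these `2n`
characters are distinct, contradicting Dedekind's independence of characters. Once `d ≡ p^k`,
`Tr(x^d) = Tr(x)`, so `Tr((1 - a) x)` vanishes identically and nondegeneracy of the trace form
forces `a = 1`.
-/

lemma norm_sum_lt_card_of_ne {ι V : Type*} [Fintype ι] [NormedAddCommGroup V] [NormedSpace ℝ V]
    [StrictConvexSpace ℝ V] {f : ι → V} (hf : ∀ i, ‖f i‖ ≤ 1) {i j : ι} (hij : f i ≠ f j) :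
    ‖∑ k, f k‖ < Fintype.card ι := by
  have hcard : (0 : ℝ) < Fintype.card ι := by
    exact_mod_cast Fintype.card_pos_iff.2 ⟨i⟩
  have hmean : ‖∑ k, (Fintype.card ι : ℝ)⁻¹ • f k‖ < 1 :=
    norm_sum_lt_of_strictConvexSpace (fun _ _ => by positivity) (by simp [hcard.ne'])
      (Finset.mem_univ i) (Finset.mem_univ j) hij (by positivity) (by positivity) fun k _ => hf k
  rwa [← Finset.smul_sum, norm_smul, Real.norm_of_nonneg (by positivity), inv_mul_lt_iff₀ hcard,
    mul_one] at hmean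

namespace FiniteField

variable {F : Type*} [Field F]

def powChar (F : Type*) [Field F] (e : ℕ) : Fˣ →* F :=
  (Units.coeHom F).comp (powMonoidHom e)

@[simp]
lemma powChar_apply (e : ℕ) (u : Fˣ) : powChar F e u = (u : F) ^ e := rfl

variable [Fintype F]

lemma powChar_eq_powChar_iff {e e' : ℕ} :
    powChar F e = powChar F e' ↔ e ≡ e' [MOD Fintype.card F - 1] := by
  classical
  have hcard : Nat.card Fˣ = Fintype.card F - 1 := by
    rw [Nat.card_eq_fintype_card, Fintype.card_units]
  rw [← hcard]
  constructor
  · intro h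
    obtain ⟨g, hg⟩ := IsCyclic.exists_ofOrder_eq_natCard (α := Fˣ)
    rw [← hg, ← pow_eq_pow_iff_modEq]
    exact Units.ext (by simpa using DFunLike.congr_fun h g)
  · intro h
    ext u
    simp only [powChar_apply, ← Units.val_pow_eq_pow_val]
    exact congrArg Units.val (pow_eq_pow_iff_modEq.2 (h.of_dvd (orderOf_dvd_natCard u)))

lemma pow_eq_pow_of_modEq {e e' : ℕ} (he : e ≠ 0) (he' : e' ≠ 0)
    (h : e ≡ e' [MOD Fintype.card F - 1]) (x : F) : x ^ e = x ^ e' := by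
  rcases eq_or_ne x 0 with rfl | hx
  · rw [zero_pow he, zero_pow he']
  · simpa using DFunLike.congr_fun (powChar_eq_powChar_iff.2 h) (Units.mk0 x hx)

variable {p : ℕ} [Fact p.Prime] [Algebra (ZMod p) F]

local notation "n" => Module.finrank (ZMod p) F

lemma card_eq_prime_pow_finrank : Fintype.card F = p ^ n := by
  rw [Module.card_eq_pow_finrank (K := ZMod p), ZMod.card]

lemma prime_pow_finrank_modEq_one : p ^ n ≡ 1 [MOD Fintype.card F - 1] := by
  have := Fintype.card_pos (α := F)
  rw [← card_eq_prime_pow_finrank, ← Nat.sub_add_cancel this]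
  simp [Nat.ModEq]

lemma eq_of_prime_pow_modEq {i j : ℕ} (hi : i < n) (hj : j < n)
    (h : p ^ i ≡ p ^ j [MOD Fintype.card F - 1]) : i = j := by
  have hp := (Fact.out : p.Prime).ne_zero
  have hfrob : frobeniusAlgEquivOfAlgebraic (ZMod p) F ^ i =
      frobeniusAlgEquivOfAlgebraic (ZMod p) F ^ j := by
    ext x
    simp only [AlgEquiv.coe_pow, coe_frobeniusAlgEquivOfAlgebraic_iterate, ZMod.card]
    exact pow_eq_pow_of_modEq (pow_ne_zero _ hp) (pow_ne_zero _ hp) h x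
  exact congrArg Fin.val <|
    (bijective_frobeniusAlgEquivOfAlgebraic_pow (ZMod p) F).1 (a₁ := ⟨i, hi⟩) (a₂ := ⟨j, hj⟩) hfrob

lemma exists_modEq_prime_pow_of_mul_modEq {d i j : ℕ} (hi : i ≤ n)
    (h : d * p ^ i ≡ p ^ j [MOD Fintype.card F - 1]) :
    ∃ k, d ≡ p ^ k [MOD Fintype.card F - 1] := by
  refine ⟨j + (n - i), ?_⟩
  calc d = d * 1 := (mul_one d).symm
    _ ≡ d * p ^ n [MOD Fintype.card F - 1] := (prime_pow_finrank_modEq_one.mul_left d).symm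
    _ = d * p ^ i * p ^ (n - i) := by rw [mul_assoc, ← pow_add, Nat.add_sub_cancel' hi]
    _ ≡ p ^ j * p ^ (n - i) [MOD Fintype.card F - 1] := h.mul_right _
    _ = p ^ (j + (n - i)) := (pow_add _ _ _).symm

lemma trace_pow_prime_pow (k : ℕ) (x : F) :
    Algebra.trace (ZMod p) F (x ^ p ^ k) = Algebra.trace (ZMod p) F x := by
  simpa [AlgEquiv.coe_pow, coe_frobeniusAlgEquivOfAlgebraic_iterate] using
    Algebra.trace_eq_of_algEquiv (frobeniusAlgEquivOfAlgebraic (ZMod p) F ^ k) x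

variable [CharP F p]

lemma algebraMap_trace_pow_sub_mul (d : ℕ) (a x : F) :
    algebraMap (ZMod p) F (Algebra.trace (ZMod p) F (x ^ d - a * x)) =
      ∑ i ∈ Finset.range n, (x ^ (d * p ^ i) - a ^ p ^ i * x ^ p ^ i) := by
  rw [algebraMap_trace_eq_sum_pow, Nat.card_zmod]
  refine Finset.sum_congr rfl fun i _ => ?_
  rw [sub_pow_char_pow, mul_pow, pow_mul]

lemma exists_modEq_prime_pow_of_trace_eq_zero {d : ℕ} (hgcd : d.Coprime (Fintype.card F - 1))
    {a : F} (H : ∀ x : F, Algebra.trace (ZMod p) F (x ^ d - a * x) = 0) :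
    ∃ k, d ≡ p ^ k [MOD Fintype.card F - 1] := by
  by_contra hdeg
  let e : Fin n ⊕ Fin n → ℕ := Sum.elim (fun i => d * p ^ (i : ℕ)) (fun i => p ^ (i : ℕ))
  have he : Function.Injective (powChar F ∘ e) := by
    rintro (i | i) (j | j) hij <;> replace hij := powChar_eq_powChar_iff.1 hij
    · exact congrArg Sum.inl (Fin.ext (eq_of_prime_pow_modEq i.2 j.2
        (Nat.ModEq.cancel_left_of_coprime hgcd.symm hij)))
    · exact (hdeg (exists_modEq_prime_pow_of_mul_modEq i.2.le hij)).elim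
    · exact (hdeg (exists_modEq_prime_pow_of_mul_modEq j.2.le hij.symm)).elim
    · exact congrArg Sum.inr (Fin.ext (eq_of_prime_pow_modEq i.2 j.2 hij))
  let c : Fin n ⊕ Fin n → F := Sum.elim 1 fun i => -a ^ p ^ (i : ℕ)
  have hrel : ∑ s, c s • ⇑(powChar F (e s)) = 0 := by
    funext u
    have := H u
    rw [← map_eq_zero_iff _ (algebraMap (ZMod p) F).injective, algebraMap_trace_pow_sub_mul,
      ← Fin.sum_univ_eq_sum_range (fun i => _ - _)] at this
    simp [c, e, Fintype.sum_sum_type, ← this, sub_eq_add_neg, Finset.sum_add_distrib]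
  have hc := Fintype.linearIndependent_iff.1 ((linearIndependent_monoidHom Fˣ F).comp _ he)
    c hrel (Sum.inl ⟨0, Module.finrank_pos⟩)
  simp [c] at hc

lemma forall_trace_pow_sub_mul_eq_zero_iff {d : ℕ} (hd : d ≠ 0)
    (hgcd : d.Coprime (Fintype.card F - 1)) (a : F) :
    (∀ x : F, Algebra.trace (ZMod p) F (x ^ d - a * x) = 0) ↔
      (∃ k, d ≡ p ^ k [MOD Fintype.card F - 1]) ∧ a = 1 := by
  have trace_eq {k : ℕ} (hk : d ≡ p ^ k [MOD Fintype.card F - 1]) (x : F) :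
      Algebra.trace (ZMod p) F (x ^ d - a * x) = Algebra.trace (ZMod p) F ((1 - a) * x) := by
    rw [pow_eq_pow_of_modEq hd (pow_ne_zero _ (Fact.out : p.Prime).ne_zero) hk, map_sub,
      trace_pow_prime_pow, sub_mul, one_mul, map_sub]
  constructor
  · intro H
    obtain ⟨k, hk⟩ := exists_modEq_prime_pow_of_trace_eq_zero hgcd H
    refine ⟨⟨k, hk⟩, ?_⟩
    have h := (traceForm_nondegenerate (ZMod p) F).1 (1 - a) fun x => by
      rw [Algebra.traceForm_apply, ← trace_eq hk, H]
    exact (sub_eq_zero.1 h).symm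
  · rintro ⟨⟨k, hk⟩, rfl⟩ x
    rw [trace_eq hk, sub_self, zero_mul, map_zero]

end FiniteField

section canonicalPsi

attribute [local instance] ZMod.algebra

variable {F : Type*} [Field F] [Fintype F] {p : ℕ} [NeZero p] [CharP F p]

lemma canonicalPsi_eq_toCircle (x : F) :
    canonicalPsi F p x = ZMod.toCircle (Algebra.trace (ZMod p) F x) := by
  rw [ZMod.toCircle_apply]
  rfl

lemma norm_canonicalPsi (x : F) : ‖canonicalPsi F p x‖ = 1 := by
  rw [canonicalPsi_eq_toCircle, Circle.norm_coe]

lemma canonicalPsi_eq_one_iff (x : F) :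
    canonicalPsi F p x = 1 ↔ Algebra.trace (ZMod p) F x = 0 := by
  rw [canonicalPsi_eq_toCircle, Circle.coe_eq_one, ← ZMod.injective_toCircle.eq_iff,
    AddChar.map_zero_eq_one]

end canonicalPsi

theorem abs_weilSum_eq_card_iff_general (F : Type*) [Field F] [Fintype F]
    (p : ℕ) [CharP F p] (d : ℕ) (hd : 0 < d)
    (hgcd : Nat.gcd d (Fintype.card F - 1) = 1) :
    ∀ a : F,
      (‖weilSum F p d a‖ = (Fintype.card F : ℝ) ↔
        ((∃ k : ℕ, d ≡ p ^ k [MOD Fintype.card F - 1]) ∧ a = 1)) ∧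
      (¬ ((∃ k : ℕ, d ≡ p ^ k [MOD Fintype.card F - 1]) ∧ a = 1) →
        ‖weilSum F p d a‖ < (Fintype.card F : ℝ)) := by
  have : Fact p.Prime := ⟨CharP.char_is_prime F p⟩
  let := ZMod.algebra F p
  intro a
  have hψ : (∀ x : F, canonicalPsi F p (x ^ d - a * x) = 1) ↔
      (∃ k, d ≡ p ^ k [MOD Fintype.card F - 1]) ∧ a = 1 := by
    simp only [canonicalPsi_eq_one_iff]
    exact FiniteField.forall_trace_pow_sub_mul_eq_zero_iff hd.ne' hgcd a
  by_cases hdeg : (∃ k, d ≡ p ^ k [MOD Fintype.card F - 1]) ∧ a = 1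
  · have hW : weilSum F p d a = Fintype.card F := by
      simp [weilSum, hψ.2 hdeg]
    rw [hW, Complex.norm_natCast]
    exact ⟨iff_of_true rfl hdeg, fun h => (h hdeg).elim⟩
  · obtain ⟨x, hx⟩ := not_forall.1 (mt hψ.1 hdeg)
    have hlt : ‖weilSum F p d a‖ < Fintype.card F :=
      norm_sum_lt_card_of_ne (fun x => (norm_canonicalPsi _).le) (i := x) (j := 0) <| by
        rwa [zero_pow hd.ne', mul_zero, sub_zero, (canonicalPsi_eq_one_iff 0).2 (map_zero _)]
    exact ⟨iff_of_false hlt.ne hdeg, fun _ => hlt⟩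

/-- `|W_{F,d}(a)| = q` iff `d` is degenerate over `F` and `a = 1`; otherwise `|W_{F,d}(a)| < q`. -/
theorem abs_weilSum_eq_card_iff (F : Type*) [Field F] [Fintype F]
    (p : ℕ) [Fact p.Prime] [CharP F p] (d : ℕ) (hd : 0 < d)
    (hgcd : Nat.gcd d (Fintype.card F - 1) = 1) :
    ∀ a : F,
      (‖weilSum F p d a‖ = (Fintype.card F : ℝ) ↔
        ((∃ k : ℕ, d ≡ p ^ k [MOD Fintype.card F - 1]) ∧ a = 1)) ∧
      (¬ ((∃ k : ℕ, d ≡ p ^ k [MOD Fintype.card F - 1]) ∧ a = 1) →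
        ‖weilSum F p d a‖ < (Fintype.card F : ℝ)) :=
  abs_weilSum_eq_card_iff_general F p d hd hgcd
end

section
/- Let F be a finite field of characteristic p and order q, and let d be an invertible exponent over F that is nondegenerate over F. Then there exists a ∈ F with W_{F,d}(a) a positive real number, and there exists b ∈ F with W_{F,d}(b) a negative real number. -/
open scoped BigOperators

/-!
Replacing `x` by `-x` shows that `W(a)` is real, since `(-x)^d = -x^d` for an invertible
exponent. Orthogonality of the primitive character `ψ` gives `∑ₐ W(a) = q` and
`∑ₐ W(a)² = q²`, and trivially `W(a) ≤ q`. The first moment yields a positive value. If no value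
were negative, then `∑ₐ W(a) (q - W(a)) = 0` with nonnegative terms forces `W(a) ∈ {0, q}`, so
`W(a) = q` for some `a`. Then `ψ(x^d) = ψ(a x)` for all `x`; as `x ↦ x^d` is onto, this makes
`y ↦ ψ(b y^d)` additive for every `b`, and primitivity of `ψ` makes `x ↦ x^d` additive. So it is a
field automorphism of `F`, i.e. a power of Frobenius, and `d` is degenerate.
-/

open Finset Function ComplexConjugate

namespace AddChar

variable {R : Type*} [CommRing R] {ψ : AddChar R ℂ}

theorem add_pow_eq_of_apply_pow_eq (hψ : ψ.IsPrimitive) {d : ℕ}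
    (hd : Surjective fun x : R ↦ x ^ d) {a : R} (h : ∀ x, ψ (x ^ d) = ψ (a * x)) (y z : R) :
    (y + z) ^ d = y ^ d + z ^ d := by
  suffices ψ.mulShift ((y + z) ^ d - y ^ d - z ^ d) = ψ.mulShift 0 by
    simpa [sub_sub, sub_eq_zero] using to_mulShift_inj_of_isPrimitive hψ this
  ext b
  obtain ⟨c, rfl⟩ := hd b
  rw [mulShift_apply, mulShift_zero, one_apply, mul_comm]
  have hscaled (w : R) : ψ (c ^ d * w ^ d) = ψ (a * c * w) := by rw [← mul_pow, h, mul_assoc]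
  calc ψ (c ^ d * ((y + z) ^ d - y ^ d - z ^ d))
      = ψ (c ^ d * (y + z) ^ d) / ψ (c ^ d * y ^ d) / ψ (c ^ d * z ^ d) := by
        rw [← map_sub_eq_div, ← map_sub_eq_div, mul_sub, mul_sub]
    _ = ψ (a * c * (y + z) - a * c * y - a * c * z) := by
        rw [hscaled, hscaled, hscaled, map_sub_eq_div, map_sub_eq_div]
    _ = 1 := by rw [mul_add, add_sub_cancel_left, sub_self, map_zero_eq_one]

variable [Fintype R]

theorem sum_sum_apply_sub_mul (hψ : ψ.IsPrimitive) (f : R → R) :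
    ∑ a, ∑ x, ψ (f x - a * x) = Fintype.card R * ψ (f 0) := by
  classical
  calc ∑ a, ∑ x, ψ (f x - a * x) = ∑ x, ψ (f x) * ∑ a, ψ (a * -x) := by
        rw [sum_comm]
        simp_rw [mul_sum, ← map_add_eq_mul]
        simp [sub_eq_add_neg]
    _ = Fintype.card R * ψ (f 0) := by
        simp_rw [sum_mulShift _ hψ]
        simp [mul_comm]

theorem sum_norm_sum_apply_sub_mul_sq (hψ : ψ.IsPrimitive) (f : R → R) :
    ∑ a, ‖∑ x, ψ (f x - a * x)‖ ^ 2 = (Fintype.card R : ℝ) ^ 2 := by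
  classical
  apply Complex.ofReal_injective
  push_cast
  calc ∑ a, ((‖∑ x, ψ (f x - a * x)‖ : ℂ)) ^ 2
      = ∑ x, ∑ y, ψ (f x - f y) * ∑ a, ψ (a * (y - x)) := by
        simp_rw [← Complex.mul_conj', map_sum, ← map_neg_eq_conj, sum_mul_sum, mul_sum]
        rw [sum_comm]
        refine sum_congr rfl fun x _ ↦ ?_
        rw [sum_comm]
        refine sum_congr rfl fun y _ ↦ sum_congr rfl fun a _ ↦ ?_
        rw [← map_add_eq_mul, ← map_add_eq_mul]
        ring_nf
    _ = (Fintype.card R : ℂ) ^ 2 := by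
        simp_rw [sum_mulShift _ hψ, sub_eq_zero]
        simp [sq]

theorem re_sum_apply_le_card {ι : Type*} [Fintype ι] (g : ι → R) :
    (∑ i, ψ (g i)).re ≤ Fintype.card ι := by
  rw [Complex.re_sum]
  calc ∑ i, (ψ (g i)).re ≤ ∑ _i : ι, (1 : ℝ) :=
        sum_le_sum fun i _ ↦ (Complex.re_le_norm _).trans_eq (ψ.norm_apply _)
    _ = Fintype.card ι := by simp

theorem apply_eq_one_of_re_sum_apply_eq_card {ι : Type*} [Fintype ι] {g : ι → R}
    (h : (∑ i, ψ (g i)).re = Fintype.card ι) (i : ι) : ψ (g i) = 1 := by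
  have hle : ∀ j ∈ univ, (ψ (g j)).re ≤ 1 :=
    fun j _ ↦ (Complex.re_le_norm _).trans_eq (ψ.norm_apply _)
  have hre : (ψ (g i)).re = 1 := by
    refine (sum_eq_sum_iff_of_le hle).mp ?_ i (mem_univ i)
    simpa [Complex.re_sum] using h
  have hnorm : ‖ψ (g i)‖ ≤ (ψ (g i)).re := by rw [ψ.norm_apply, hre]
  rw [RCLike.norm_le_re_iff_eq_norm.mp hnorm, ψ.norm_apply]
  simp

end AddChar

namespace FiniteField

variable {F : Type*} [Field F] [Fintype F] {d : ℕ}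

theorem pow_surjective_of_coprime (hd : d ≠ 0) (hcop : d.Coprime (Fintype.card F - 1)) :
    Surjective fun x : F ↦ x ^ d := by
  intro y
  rcases eq_or_ne y 0 with rfl | hy
  · exact ⟨0, zero_pow hd⟩
  have hord : orderOf y ∣ Fintype.card F - 1 :=
    orderOf_dvd_of_pow_eq_one (pow_card_sub_one_eq_one y hy)
  obtain ⟨m, hm⟩ := exists_pow_eq_self_of_coprime (hcop.coprime_dvd_right hord)
  exact ⟨y ^ m, (pow_right_comm y m d).trans hm⟩

theorem neg_pow_of_coprime (hd : d ≠ 0) (hcop : d.Coprime (Fintype.card F - 1)) (x : F) :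
    (-x) ^ d = -x ^ d := by
  have hinj := Finite.injective_iff_surjective.mpr (pow_surjective_of_coprime hd hcop)
  have hsq : (-1 : F) ^ d * (-1) ^ d = 1 := by rw [← mul_pow, neg_one_mul, neg_neg, one_pow]
  have hneg_one : (-1 : F) ^ d = -1 := by
    rcases mul_self_eq_one_iff.mp hsq with h | h
    · have hchar_two : (-1 : F) = 1 := hinj (h.trans (one_pow d).symm)
      rw [h, hchar_two]
    · exact h
  rw [neg_eq_neg_one_mul, mul_pow, hneg_one, neg_one_mul]

theorem exists_modEq_pow_of_add_pow (p : ℕ) [Fact p.Prime] [CharP F p] (hd : d ≠ 0)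
    (hadd : ∀ x y : F, (x + y) ^ d = x ^ d + y ^ d) :
    ∃ k, d ≡ p ^ k [MOD Fintype.card F - 1] := by
  let _ : Algebra (ZMod p) F := ZMod.algebra F p
  let σ : F →+* F :=
    { powMonoidHom d with
      map_zero' := zero_pow hd
      map_add' := hadd }
  let σ' : F →ₐ[ZMod p] F :=
    { σ with
      commutes' := fun r ↦ RingHom.congr_fun
        (Subsingleton.elim (σ.comp (algebraMap (ZMod p) F)) (algebraMap (ZMod p) F)) r }
  obtain ⟨k, hk⟩ := (bijective_frobeniusAlgHom_pow (ZMod p) F).2 σ'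
  have hfrob (x : F) : x ^ p ^ (k : ℕ) = x ^ d := by
    have := congrArg (· x) hk
    simp only [AlgHom.coe_pow, coe_frobeniusAlgHom, pow_iterate, ZMod.card] at this
    exact this
  obtain ⟨g, hg⟩ := IsCyclic.exists_ofOrder_eq_natCard (α := Fˣ)
  rw [Nat.card_units, Nat.card_eq_fintype_card] at hg
  refine ⟨k, ?_⟩
  rw [← hg, ← pow_eq_pow_iff_modEq]
  exact Units.ext (by push_cast; exact (hfrob g).symm)

end FiniteField

section CanonicalAddChar

variable (F : Type*) [Field F] [Fintype F] (p : ℕ) [Fact p.Prime] [CharP F p]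

theorem isPrimitiveRoot_exp_two_pi_I_div :
    IsPrimitiveRoot (Complex.exp (2 * Real.pi * Complex.I / p)) p :=
  Complex.isPrimitiveRoot_exp p (Fact.out : p.Prime).ne_zero

noncomputable def canonicalAddChar : AddChar F ℂ :=
  let _ : Algebra (ZMod p) F := ZMod.algebra F p
  (AddChar.zmodChar p (isPrimitiveRoot_exp_two_pi_I_div p).pow_eq_one).compAddMonoidHom
    (Algebra.trace (ZMod p) F).toAddMonoidHom

theorem canonicalAddChar_apply (x : F) : canonicalAddChar F p x = canonicalPsi F p x := by
  rw [canonicalAddChar, AddChar.compAddMonoidHom_apply, AddChar.zmodChar_apply,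
    ← Complex.exp_nat_mul, canonicalPsi, LinearMap.toAddMonoidHom_coe]
  ring_nf

theorem isPrimitive_canonicalAddChar : (canonicalAddChar F p).IsPrimitive := by
  let _ : Algebra (ZMod p) F := ZMod.algebra F p
  refine AddChar.IsPrimitive.of_ne_one fun h ↦ one_ne_zero <|
    (traceForm_nondegenerate (ZMod p) F).1 1 fun y ↦ ?_
  have hy := DFunLike.congr_fun h y
  rwa [AddChar.one_apply, canonicalAddChar, AddChar.compAddMonoidHom_apply,
    (AddChar.zmodChar_primitive_of_primitive_root p
      (isPrimitiveRoot_exp_two_pi_I_div p)).zmod_char_eq_one_iff, LinearMap.toAddMonoidHom_coe,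
    ← one_mul y] at hy

end CanonicalAddChar

theorem exists_eq_of_sum_eq_of_sum_sq_eq {ι : Type*} [Fintype ι] {w : ι → ℝ} {c : ℝ}
    (hc : c ≠ 0) (h0 : ∀ i, 0 ≤ w i) (hle : ∀ i, w i ≤ c) (hsum : ∑ i, w i = c)
    (hsq : ∑ i, w i ^ 2 = c ^ 2) : ∃ i, w i = c := by
  have hzero : ∑ i, w i * (c - w i) = 0 := by
    simp_rw [mul_sub, sum_sub_distrib, ← sum_mul, hsum, ← sq, hsq, sub_self]
  have hterms := (sum_eq_zero_iff_of_nonneg fun i _ ↦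
    mul_nonneg (h0 i) (sub_nonneg.mpr (hle i))).mp hzero
  by_contra! hne
  have hw : ∀ i, w i = 0 := fun i ↦
    (mul_eq_zero.mp (hterms i (mem_univ i))).resolve_right (sub_ne_zero.mpr (hne i).symm)
  exact hc (by simpa [hw] using hsum.symm)

section WeilSum

variable (F : Type*) [Field F] [Fintype F] (p : ℕ) [Fact p.Prime] [CharP F p] (d : ℕ)

theorem weilSum_eq_sum_canonicalAddChar (a : F) :
    weilSum F p d a = ∑ x, canonicalAddChar F p (x ^ d - a * x) := by
  simp only [weilSum, canonicalAddChar_apply]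

theorem conj_weilSum (hd : d ≠ 0) (hcop : d.Coprime (Fintype.card F - 1)) (a : F) :
    conj (weilSum F p d a) = weilSum F p d a := by
  rw [weilSum_eq_sum_canonicalAddChar, map_sum]
  simp_rw [← AddChar.map_neg_eq_conj]
  refine Fintype.sum_equiv (Equiv.neg F) _ _ fun x ↦ ?_
  rw [Equiv.neg_apply, FiniteField.neg_pow_of_coprime hd hcop, neg_sub, mul_neg, sub_neg_eq_add,
    neg_add_eq_sub]

theorem sum_weilSum (hd : d ≠ 0) : ∑ a, weilSum F p d a = Fintype.card F := by
  simp_rw [weilSum_eq_sum_canonicalAddChar,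
    AddChar.sum_sum_apply_sub_mul (isPrimitive_canonicalAddChar F p), zero_pow hd,
    AddChar.map_zero_eq_one, mul_one]

theorem sum_norm_weilSum_sq : ∑ a, ‖weilSum F p d a‖ ^ 2 = (Fintype.card F : ℝ) ^ 2 := by
  simp_rw [weilSum_eq_sum_canonicalAddChar,
    AddChar.sum_norm_sum_apply_sub_mul_sq (isPrimitive_canonicalAddChar F p)]

theorem re_weilSum_le_card (a : F) : (weilSum F p d a).re ≤ Fintype.card F := by
  rw [weilSum_eq_sum_canonicalAddChar]
  exact AddChar.re_sum_apply_le_card _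

theorem exists_modEq_pow_of_re_weilSum_eq_card (hd : d ≠ 0)
    (hcop : d.Coprime (Fintype.card F - 1)) {a : F}
    (h : (weilSum F p d a).re = Fintype.card F) : ∃ k, d ≡ p ^ k [MOD Fintype.card F - 1] := by
  rw [weilSum_eq_sum_canonicalAddChar] at h
  have hψ (x : F) : canonicalAddChar F p (x ^ d) = canonicalAddChar F p (a * x) := by
    rw [← sub_add_cancel (x ^ d) (a * x), AddChar.map_add_eq_mul,
      AddChar.apply_eq_one_of_re_sum_apply_eq_card h x, one_mul]
  exact FiniteField.exists_modEq_pow_of_add_pow p hd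
    (AddChar.add_pow_eq_of_apply_pow_eq (isPrimitive_canonicalAddChar F p)
      (FiniteField.pow_surjective_of_coprime hd hcop) hψ)

end WeilSum

/-- If `d` is nondegenerate over `F`, then `W_{F,d}` takes a positive and a negative value. -/
theorem weilSum_pos_and_neg (F : Type*) [Field F] [Fintype F]
    (p : ℕ) [Fact p.Prime] [CharP F p] (d : ℕ) (hd : 0 < d)
    (hgcd : Nat.gcd d (Fintype.card F - 1) = 1)
    (hndeg : ¬ ∃ k : ℕ, d ≡ p ^ k [MOD Fintype.card F - 1]) :
    (∃ a : F, ∃ r : ℝ, 0 < r ∧ weilSum F p d a = (r : ℂ)) ∧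
      (∃ b : F, ∃ r : ℝ, r < 0 ∧ weilSum F p d b = (r : ℂ)) := by
  set w : F → ℝ := fun a ↦ (weilSum F p d a).re
  have hreal (a : F) : weilSum F p d a = w a :=
    (Complex.conj_eq_iff_re.mp (conj_weilSum F p d hd.ne' hgcd a)).symm
  have hsum : ∑ a, w a = Fintype.card F := by
    simpa [w] using congrArg Complex.re (sum_weilSum F p d hd.ne')
  have hsq : ∑ a, w a ^ 2 = (Fintype.card F : ℝ) ^ 2 := by
    simpa [hreal] using sum_norm_weilSum_sq F p d
  constructor
  · obtain ⟨a, -, ha⟩ := exists_lt_of_sum_lt (s := univ) (f := 0) (g := w)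
      (by simp [hsum, Fintype.card_pos])
    exact ⟨a, w a, ha, hreal a⟩
  · by_contra! hneg
    have hnonneg (a : F) : 0 ≤ w a := not_lt.mp fun ha ↦ hneg a (w a) ha (hreal a)
    obtain ⟨a, ha⟩ := exists_eq_of_sum_eq_of_sum_sq_eq (Nat.cast_ne_zero.mpr Fintype.card_ne_zero)
      hnonneg (re_weilSum_le_card F p d) hsum hsq
    exact hndeg (exists_modEq_pow_of_re_weilSum_eq_card F p d hd.ne' hgcd ha)
end

section
/- Let F be a finite field of characteristic p > 3 and order q. Then there is no a ∈ F with a ≠ 0 such that W_{F,q−2}(a) = 0. -/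
open scoped BigOperators

/- ### Auxiliary lemmas ### -/


open Finset Polynomial in
/-- If a fixed-point-free involution maps a finset to itself, the finset has even card. -/
lemma even_card_of_fpf_involution {α : Type*} [DecidableEq α] (f : α → α) :
    ∀ (n : ℕ) (s : Finset α), s.card = n → (∀ x ∈ s, f x ∈ s) →
      (∀ x ∈ s, f (f x) = x) → (∀ x ∈ s, f x ≠ x) → Even s.card := by
  intro n
  induction n using Nat.strong_induction_on with
  | _ n ih =>
    intro s hcard hmaps hinv hfpf
    rcases s.eq_empty_or_nonempty with rfl | ⟨x, hx⟩
    · simp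
    · have hfx : f x ∈ s := hmaps x hx
      have hne : f x ≠ x := hfpf x hx
      have h2 : 2 ≤ s.card := by
        have : ({f x, x} : Finset α) ⊆ s := by
          intro y hy
          rcases Finset.mem_insert.mp hy with rfl | hy
          · exact hfx
          · exact (Finset.mem_singleton.mp hy) ▸ hx
        calc 2 = ({f x, x} : Finset α).card := (Finset.card_pair hne).symm
        _ ≤ s.card := Finset.card_le_card this
      set s' := (s.erase x).erase (f x) with hs'
      have hsub : ∀ y ∈ s', y ∈ s := by
        intro y hy
        exact Finset.mem_of_mem_erase (Finset.mem_of_mem_erase hy)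
      have hcard' : s'.card = s.card - 2 := by
        rw [hs', Finset.card_erase_of_mem, Finset.card_erase_of_mem hx]
        · omega
        · exact Finset.mem_erase.mpr ⟨hne, hfx⟩
      have hmem' : ∀ y, y ∈ s' ↔ (y ∈ s ∧ y ≠ x ∧ y ≠ f x) := by
        intro y
        simp only [hs', Finset.mem_erase, Finset.mem_erase]
        tauto
      have heven' : Even s'.card := by
        refine ih s'.card ?_ s' rfl ?_ ?_ ?_
        · omega
        · intro y hy
          obtain ⟨hys, hyx, hyfx⟩ := (hmem' y).mp hy
          refine (hmem' (f y)).mpr ⟨hmaps y hys, ?_, ?_⟩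
          · intro h
            exact hyfx (by rw [← hinv y hys, h])
          · intro h
            have : f (f y) = f (f x) := by rw [h]
            rw [hinv y hys, hinv x hx] at this
            exact hyx this
        · intro y hy; exact hinv y (hsub y hy)
        · intro y hy; exact hfpf y (hsub y hy)
      have : s.card = s'.card + 2 := by omega
      rw [this]
      exact heven'.add (by norm_num)


open Finset Polynomial

-- sum over ZMod p vs range p
lemma zmod_sum_val {p : ℕ} [NeZero p] {M : Type*} [AddCommMonoid M] (f : ℕ → M) :
    ∑ j : ZMod p, f (ZMod.val j) = ∑ i ∈ Finset.range p, f i := by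
  refine Finset.sum_nbij' (fun j => ZMod.val j) (fun i => (i : ZMod p)) ?_ ?_ ?_ ?_ ?_
  · intro j _
    exact Finset.mem_range.mpr (ZMod.val_lt j)
  · intro i _
    exact Finset.mem_univ _
  · intro j _
    exact ZMod.natCast_rightInverse j
  · intro i hi
    exact ZMod.val_cast_of_lt (Finset.mem_range.mp hi)
  · intro j _
    rfl

lemma neg_one_val {p : ℕ} (hp : 1 < p) : (-1 : ZMod p).val = p - 1 := by
  haveI : NeZero p := ⟨by omega⟩
  have h1 : ((p - 1 : ℕ) : ZMod p) = -1 := by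
    have : ((p : ℕ) : ZMod p) = 0 := ZMod.natCast_self p
    have hcast : ((p - 1 : ℕ) : ZMod p) = (p : ZMod p) - 1 := by
      push_cast [Nat.cast_sub (by omega : 1 ≤ p)]
      ring
    rw [hcast, this]; ring
  rw [← h1, ZMod.val_cast_of_lt (by omega)]

/-- Rational-coefficient relations among `ζ^0, …, ζ^{p-1}` for `ζ = e^{2πi/p}` force all
coefficients equal. -/
lemma coeffs_eq_of_sum_zeta_pow_eq_zero {p : ℕ} [hpp : Fact p.Prime] (c : ZMod p → ℤ)
    (h : ∑ j : ZMod p, (c j : ℂ) *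
      Complex.exp (2 * Real.pi * Complex.I / p) ^ (ZMod.val j) = 0) :
    ∀ j, c j = c (-1) := by
  have hp1 : 1 < p := hpp.out.one_lt
  haveI : NeZero p := ⟨by omega⟩
  set ζ : ℂ := Complex.exp (2 * Real.pi * Complex.I / p) with hζdef
  have hζ : IsPrimitiveRoot ζ p := by
    exact Complex.isPrimitiveRoot_exp p (by omega)
  have hgeom : ∑ j : ZMod p, ζ ^ (ZMod.val j) = 0 := by
    rw [zmod_sum_val (fun i => ζ ^ i)]
    exact hζ.geom_sum_eq_zero hp1
  by_contra hcon
  push_neg at hcon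
  obtain ⟨j₀, hj₀⟩ := hcon
  set g : ℚ[X] := ∑ j : ZMod p, Polynomial.C ((c j - c (-1) : ℤ) : ℚ) * X ^ (ZMod.val j) with hg
  have hcoeff : ∀ m : ℕ, g.coeff m = ∑ j : ZMod p,
      (if m = ZMod.val j then ((c j - c (-1) : ℤ) : ℚ) else 0) := by
    intro m
    rw [hg, Polynomial.finset_sum_coeff]
    refine Finset.sum_congr rfl fun j _ => ?_
    rw [Polynomial.coeff_C_mul, Polynomial.coeff_X_pow]
    split <;> simp_all
  have hval_inj : Function.Injective (ZMod.val : ZMod p → ℕ) := ZMod.val_injective p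
  have hcoeff' : ∀ j : ZMod p, g.coeff (ZMod.val j) = ((c j - c (-1) : ℤ) : ℚ) := by
    intro j
    rw [hcoeff]
    rw [Finset.sum_eq_single j]
    · simp
    · intro b _ hb
      have : ZMod.val j ≠ ZMod.val b := fun hh => hb (hval_inj hh.symm)
      simp [this]
    · intro hj; exact absurd (Finset.mem_univ j) hj
  have hgne : g ≠ 0 := by
    intro h0
    have := hcoeff' j₀
    rw [h0] at this
    simp only [Polynomial.coeff_zero] at this
    have h2 : ((c j₀ - c (-1) : ℤ) : ℚ) = 0 := this.symm
    have h3 : (c j₀ - c (-1) : ℤ) = 0 := by exact_mod_cast h2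
    omega
  have haev : Polynomial.aeval ζ g = 0 := by
    rw [hg]
    simp only [map_sum, map_mul, map_pow, Polynomial.aeval_C, Polynomial.aeval_X]
    have : ∀ j : ZMod p, (algebraMap ℚ ℂ) ((c j - c (-1) : ℤ) : ℚ) * ζ ^ (ZMod.val j)
        = (c j : ℂ) * ζ ^ (ZMod.val j) - (c (-1) : ℂ) * ζ ^ (ZMod.val j) := by
      intro j
      rw [map_intCast]
      push_cast
      ring
    rw [Finset.sum_congr rfl fun j _ => this j, Finset.sum_sub_distrib, h, ← Finset.mul_sum,
      hgeom]
    simp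
  have hdvd : minpoly ℚ ζ ∣ g := minpoly.dvd ℚ ζ haev
  have hminpoly : (minpoly ℚ ζ).natDegree = p - 1 := by
    rw [← Polynomial.cyclotomic_eq_minpoly_rat hζ (by omega), Polynomial.natDegree_cyclotomic,
      Nat.totient_prime hpp.out]
  have hdegle : g.natDegree < p - 1 := by
    have hdeg : g.degree < ((p : ℕ) - 1 : ℕ) := by
      rw [Polynomial.degree_lt_iff_coeff_zero]
      intro m hm
      rw [hcoeff]
      refine Finset.sum_eq_zero fun j _ => ?_
      split
      · next heq =>
        have hvlt : ZMod.val j < p := ZMod.val_lt j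
        have : ZMod.val j = p - 1 := by omega
        have : j = -1 := hval_inj (by rw [this, neg_one_val hp1])
        simp [this]
      · rfl
    exact (Polynomial.natDegree_lt_iff_degree_lt (n := p - 1) hgne).mpr hdeg
  have := Polynomial.natDegree_le_of_dvd hdvd hgne
  omega

/-- Kononen-Rinta-aho-Väänänen: if the characteristic `p > 3`, then there is no nonzero
`a ∈ F` with `W_{F,q−2}(a) = 0`. -/
theorem weilSum_kloosterman_ne_zero (F : Type*) [Field F] [Fintype F]
    (p : ℕ) [Fact p.Prime] [CharP F p] (hp : 3 < p) :
    ¬ ∃ a : F, a ≠ 0 ∧ weilSum F p (Fintype.card F - 2) a = 0 := by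
  classical
  rintro ⟨a, ha, hW⟩
  letI : Algebra (ZMod p) F := ZMod.algebra F p
  have hpp : p.Prime := Fact.out
  have hp1 : 1 < p := hpp.one_lt
  haveI : NeZero p := ⟨by omega⟩
  obtain ⟨n, -, hcard⟩ := FiniteField.card F p
  set q : ℕ := Fintype.card F with hq
  have hn1 : 1 ≤ (n : ℕ) := n.one_le
  have hq5 : 4 ≤ q := by
    rw [hcard]
    calc 4 ≤ p := by omega
    _ = p ^ 1 := (pow_one p).symm
    _ ≤ p ^ (n : ℕ) := Nat.pow_le_pow_right (by omega) hn1
  set t : F → ZMod p := fun x => Algebra.trace (ZMod p) F (x ^ (q - 2) - a * x) with ht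
  set N : ZMod p → ℕ := fun j => (Finset.univ.filter fun x : F => t x = j).card with hN
  set ζ : ℂ := Complex.exp (2 * Real.pi * Complex.I / p) with hζ
  -- Step 1 : the Weil sum as a linear combination of powers of ζ
  have hpsi : ∀ y : F, canonicalPsi F p y = ζ ^ (Algebra.trace (ZMod p) F y).val := by
    intro y
    have h1 : canonicalPsi F p y
        = Complex.exp (2 * Real.pi * Complex.I * ((Algebra.trace (ZMod p) F y).val : ℂ) / p) :=
      rfl
    rw [h1, hζ, ← Complex.exp_nat_mul]
    congr 1
    ring
  have hWsum : weilSum F p (q - 2) a = ∑ j : ZMod p, (N j : ℂ) * ζ ^ (ZMod.val j) := by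
    rw [weilSum]
    calc ∑ x : F, canonicalPsi F p (x ^ (q - 2) - a * x)
        = ∑ x : F, ζ ^ (ZMod.val (t x)) := Finset.sum_congr rfl fun x _ => hpsi _
    _ = ∑ j : ZMod p, ∑ _x ∈ Finset.univ.filter (fun x : F => t x = j), ζ ^ (ZMod.val j) :=
        (Finset.sum_fiberwise' Finset.univ t (fun j => ζ ^ (ZMod.val j))).symm
    _ = ∑ j : ZMod p, (N j : ℂ) * ζ ^ (ZMod.val j) := by
        refine Finset.sum_congr rfl fun j _ => ?_
        rw [Finset.sum_const, hN]
        simp [mul_comm]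
  -- Step 2 : all fibers have the same cardinality
  have hNeq : ∀ j, ((N j : ℤ)) = ((N (-1) : ℤ)) := by
    refine coeffs_eq_of_sum_zeta_pow_eq_zero (fun j => (N j : ℤ)) ?_
    have := hWsum.symm.trans hW
    rw [← this, ← hζ]
    push_cast
    rfl
  have hNeq' : ∀ j, N j = N (-1) := fun j => by exact_mod_cast hNeq j
  -- Step 3 : hence each fiber has odd cardinality p^(n-1)
  have hsum : ∑ j : ZMod p, N j = q := by
    have := Finset.card_eq_sum_card_fiberwise (f := t) (s := Finset.univ)
      (t := Finset.univ) (fun x _ => Finset.mem_univ (t x))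
    rw [Finset.card_univ] at this
    exact this.symm
  have hpN : p * N (-1) = q := by
    rw [← hsum, Finset.sum_congr rfl fun j _ => hNeq' j, Finset.sum_const, Finset.card_univ,
      ZMod.card, smul_eq_mul]
  have hNval : N (-1) = p ^ ((n : ℕ) - 1) := by
    have h1 : (n : ℕ) = ((n : ℕ) - 1) + 1 := by omega
    have h2 : p ^ (n : ℕ) = p * p ^ ((n : ℕ) - 1) := by
      conv_lhs => rw [h1]
      rw [pow_succ']
    exact Nat.eq_of_mul_eq_mul_left hpp.pos (by rw [hpN, hcard, h2])
  have hodd : Odd (N (-1)) := by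
    rw [hNval]
    exact (hpp.odd_of_ne_two (by omega)).pow
  -- Step 4 : fixed points of the involution
  set Fix : Finset F := Finset.univ.filter (fun x : F => x ≠ 0 ∧ a * x ^ 2 = -1) with hFix
  have hFix2 : Fix.card ≤ 2 := by
    rcases Fix.eq_empty_or_nonempty with he | ⟨x₁, hx₁⟩
    · rw [he]; simp
    · have hsub : Fix ⊆ {x₁, -x₁} := by
        intro y hy
        obtain ⟨-, hy0, hy1⟩ := Finset.mem_filter.mp hy
        obtain ⟨-, hx10, hx11⟩ := Finset.mem_filter.mp hx₁
        have : a * y ^ 2 = a * x₁ ^ 2 := by rw [hy1, hx11]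
        have hsq : y * y = x₁ * x₁ := by
          have := mul_left_cancel₀ ha this
          rw [pow_two, pow_two] at this
          exact this
        rcases mul_self_eq_mul_self_iff.mp hsq with h | h
        · exact Finset.mem_insert.mpr (Or.inl h)
        · exact Finset.mem_insert.mpr (Or.inr (Finset.mem_singleton.mpr h))
      calc Fix.card ≤ ({x₁, -x₁} : Finset F).card := Finset.card_le_card hsub
      _ ≤ 2 := Finset.card_insert_le _ _ |>.trans (by simp)
  -- Step 5 : choose a good trace value j
  obtain ⟨j, hj⟩ : ∃ j : ZMod p, j ∉ insert (0 : ZMod p) (Fix.image t) := by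
    by_contra hcon
    push_neg at hcon
    have hsub : (Finset.univ : Finset (ZMod p)) ⊆ insert (0 : ZMod p) (Fix.image t) :=
      fun j _ => hcon j
    have hle := Finset.card_le_card hsub
    rw [Finset.card_univ, ZMod.card] at hle
    have : (insert (0 : ZMod p) (Fix.image t)).card ≤ 3 := by
      calc (insert (0 : ZMod p) (Fix.image t)).card ≤ (Fix.image t).card + 1 :=
        Finset.card_insert_le _ _
      _ ≤ Fix.card + 1 := by
          have := Finset.card_image_le (f := t) (s := Fix)
          omega
      _ ≤ 3 := by omega
    omega
  have hj0 : j ≠ 0 := fun h => hj (by rw [h]; exact Finset.mem_insert_self 0 _)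
  -- Step 6 : the fiber over j carries a fixed-point-free involution
  set S : Finset F := Finset.univ.filter (fun x : F => t x = j) with hS
  have ht0 : t 0 = 0 := by
    have h0 : (0 : F) ^ (q - 2) - a * 0 = 0 := by
      rw [zero_pow (by omega : q - 2 ≠ 0)]; ring
    show Algebra.trace (ZMod p) F ((0 : F) ^ (q - 2) - a * 0) = 0
    rw [h0, map_zero]
  have hSne0 : ∀ x ∈ S, x ≠ 0 := by
    intro x hx hx0
    have := (Finset.mem_filter.mp hx).2
    rw [hx0, ht0] at this
    exact hj0 this.symm
  set σ : F → F := fun x => -(a * x)⁻¹ with hσ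
  have hpow : ∀ y : F, y ≠ 0 → y ^ (q - 2) = y⁻¹ := by
    intro y hy
    have h1 : y ^ (q - 2) * y = 1 := by
      rw [← pow_succ, show q - 2 + 1 = q - 1 by omega]
      exact FiniteField.pow_card_sub_one_eq_one y hy
    exact eq_inv_of_mul_eq_one_left h1
  have hkey : ∀ x : F, x ≠ 0 → t (σ x) = t x := by
    intro x hx
    have hax : a * x ≠ 0 := mul_ne_zero ha hx
    have hσx : σ x ≠ 0 := by
      rw [hσ]
      exact neg_ne_zero.mpr (inv_ne_zero hax)
    have harg : (σ x) ^ (q - 2) - a * σ x = x ^ (q - 2) - a * x := by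
      rw [hpow _ hσx, hpow _ hx, hσ]
      field_simp
      ring
    exact congrArg (Algebra.trace (ZMod p) F) harg
  have hmaps : ∀ x ∈ S, σ x ∈ S := by
    intro x hx
    refine Finset.mem_filter.mpr ⟨Finset.mem_univ _, ?_⟩
    rw [hkey x (hSne0 x hx)]
    exact (Finset.mem_filter.mp hx).2
  have hinvol : ∀ x ∈ S, σ (σ x) = x := by
    intro x hx
    have hx0 := hSne0 x hx
    have hax : a * x ≠ 0 := mul_ne_zero ha hx0
    rw [hσ]
    field_simp
  have hfpf : ∀ x ∈ S, σ x ≠ x := by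
    intro x hx heq
    have hx0 := hSne0 x hx
    have hax : a * x ≠ 0 := mul_ne_zero ha hx0
    rw [hσ] at heq
    have h3 : (a * x)⁻¹ = -x := neg_eq_iff_eq_neg.mp heq
    have h4 := mul_inv_cancel₀ hax
    rw [h3] at h4
    have h5 : a * x ^ 2 = -1 := by linear_combination -h4
    have hxFix : x ∈ Fix := Finset.mem_filter.mpr ⟨Finset.mem_univ _, hx0, h5⟩
    have : t x ∈ Fix.image t := Finset.mem_image_of_mem t hxFix
    rw [(Finset.mem_filter.mp hx).2] at this
    exact hj (Finset.mem_insert_of_mem this)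
  have heven : Even S.card :=
    even_card_of_fpf_involution σ S.card S rfl hmaps hinvol hfpf
  have hcardS : S.card = N j := rfl
  rw [hcardS, hNeq' j] at heven
  exact (Nat.not_even_iff_odd.mpr hodd) heven
end

section
/- Let F be a finite field of characteristic 2 and order q = 2^n with n odd, and let d be an invertible exponent over F. Then there exists some a ∈ F with a ≠ 0 such that |W_{F,d}(a)| ≥ √(2q). -/
open scoped BigOperators

/-! In characteristic 2 the canonical character only takes the values `±1`, so the Weil sums
`W(a)` are real. Parseval gives `∑ₐ W(a)² = q²`, and `W(0) = 0` because `x ↦ x^d` permutes `F`.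
Now sum the fourth moments `∑ₐ (∑ₓ ψ(b xᵈ - a x))⁴` over `b ∈ F`: by orthogonality the total is
`q²` times the number `N` of solutions of `x + y + z + w = 0 = xᵈ + yᵈ + zᵈ + wᵈ`, while writing
`b = cᵈ` and rescaling `x` shows that every term with `b ≠ 0` equals `∑ₐ W(a)⁴`; the term `b = 0`
is `q⁴`. The solutions whose coordinates are equal in pairs give `N ≥ 3q² - 2q`, hence
`∑ₐ W(a)⁴ ≥ 2q³ = 2q · ∑ₐ W(a)²`, and some `W(a)²` is at least `2q`. -/

open Finset

theorem AddChar.map_sum_eq_prod {A M ι : Type*} [AddCommMonoid A] [CommMonoid M]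
    (ψ : AddChar A M) (s : Finset ι) (u : ι → A) :
    ψ (∑ i ∈ s, u i) = ∏ i ∈ s, ψ (u i) :=
  map_prod ψ.toMonoidHom (fun i => Multiplicative.ofAdd (u i)) s

theorem Finset.card_add_card_add_card_le_card_union_add {α : Type*} [DecidableEq α]
    {A B C D : Finset α} (hAB : A ∩ B ⊆ D) (hAC : A ∩ C ⊆ D) (hBC : B ∩ C ⊆ D) :
    #A + #B + #C ≤ #(A ∪ B ∪ C) + 2 * #D := by
  have hABC : (A ∪ B) ∩ C ⊆ D := by
    rw [union_inter_distrib_right]; exact union_subset hAC hBC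
  have h₁ := card_union_add_card_inter A B
  have h₂ := card_union_add_card_inter (A ∪ B) C
  have := card_le_card hAB
  have := card_le_card hABC
  omega

theorem exists_le_sq_of_mul_sum_sq_le_sum_pow_four {ι : Type*} (s : Finset ι) (W : ι → ℝ)
    {c : ℝ} (hpos : 0 < ∑ i ∈ s, W i ^ 2) (h : c * ∑ i ∈ s, W i ^ 2 ≤ ∑ i ∈ s, W i ^ 4) :
    ∃ i ∈ s, c ≤ W i ^ 2 := by
  by_contra! hlt
  obtain ⟨j, hj, hWj⟩ := exists_ne_zero_of_sum_ne_zero hpos.ne'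
  have : ∑ i ∈ s, W i ^ 4 < ∑ i ∈ s, c * W i ^ 2 := by
    refine sum_lt_sum (fun i hi => ?_) ⟨j, hj, ?_⟩
    · nlinarith [hlt i hi, sq_nonneg (W i)]
    · nlinarith [hlt j hj, lt_of_le_of_ne (sq_nonneg (W j)) hWj.symm]
  rw [← mul_sum] at this
  linarith

theorem pow_bijective_of_coprime {F : Type*} [Field F] [Fintype F] {d : ℕ} (hd : d ≠ 0)
    (hcop : d.Coprime (Fintype.card F - 1)) :
    Function.Bijective fun x : F => x ^ d := by
  rw [← Finite.injective_iff_bijective]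
  have hunits : (Nat.card Fˣ).Coprime d := by
    rwa [Nat.card_units, Nat.card_eq_fintype_card, Nat.coprime_comm]
  intro x y hxy
  simp only at hxy
  rcases eq_or_ne x 0 with rfl | hx
  · exact ((pow_eq_zero_iff hd).1 (by rw [← hxy, zero_pow hd])).symm
  rcases eq_or_ne y 0 with rfl | hy
  · exact (pow_eq_zero_iff hd).1 (by rw [hxy, zero_pow hd])
  have := (powCoprime hunits).injective (a₁ := Units.mk0 x hx) (a₂ := Units.mk0 y hy)
    (Units.ext (by simpa using hxy))
  simpa using congrArg Units.val this

section CharSum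

variable {F : Type*} [Field F] [Fintype F] (ψ : AddChar F ℝ)

def charSum (f : F → F) (a : F) : ℝ := ∑ x, ψ (f x - a * x)

theorem charSum_zero_right_of_bijective (hψ : ψ ≠ 1) {f : F → F} (hf : f.Bijective) :
    charSum ψ f 0 = 0 := by
  simp only [charSum, zero_mul, sub_zero]
  rw [Fintype.sum_bijective f hf _ ψ fun _ => rfl, AddChar.sum_eq_zero_of_ne_one hψ]

theorem charSum_comp_mul (f : F → F) {c : F} (hc : c ≠ 0) (a : F) :
    charSum ψ (fun x => f (c * x)) a = charSum ψ f (a / c) :=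
  Fintype.sum_equiv (Equiv.mulLeft₀ c hc) _ _ fun x => by
    rw [Equiv.mulLeft₀_apply, ← mul_assoc, div_mul_cancel₀ a hc]

theorem sum_charSum_comp_mul_pow (f : F → F) {c : F} (hc : c ≠ 0) (k : ℕ) :
    ∑ a, charSum ψ (fun x => f (c * x)) a ^ k = ∑ a, charSum ψ f a ^ k := by
  simp only [charSum_comp_mul ψ f hc]
  exact Fintype.sum_equiv (Equiv.divRight₀ c hc) _ _ fun _ => rfl

variable [DecidableEq F]

theorem charSum_const_zero (hψ : ψ ≠ 1) (a : F) :
    charSum ψ (fun _ => 0) a = if a = 0 then (Fintype.card F : ℝ) else 0 := by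
  simp only [charSum, zero_sub, mul_comm a, ← mul_neg,
    AddChar.sum_mulShift _ (AddChar.IsPrimitive.of_ne_one hψ), neg_eq_zero, Nat.cast_ite,
    Nat.cast_zero]

theorem sum_charSum_pow (hψ : ψ ≠ 1) (f : F → F) (k : ℕ) :
    ∑ a, charSum ψ f a ^ k =
      Fintype.card F * ∑ v : Fin k → F with ∑ i, v i = 0, ψ (∑ i, f (v i)) := by
  have hprim := AddChar.IsPrimitive.of_ne_one hψ
  calc ∑ a, charSum ψ f a ^ k
      = ∑ a, ∑ v : Fin k → F, ψ (∑ i, f (v i)) * ψ (a * -∑ i, v i) := by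
        refine sum_congr rfl fun a _ => ?_
        rw [charSum, Fintype.sum_pow]
        refine sum_congr rfl fun v _ => ?_
        rw [← AddChar.map_sum_eq_prod, ← AddChar.map_add_eq_mul, sum_sub_distrib, mul_neg,
          mul_sum, sub_eq_add_neg]
    _ = ∑ v : Fin k → F, ψ (∑ i, f (v i)) * ∑ a, ψ (a * -∑ i, v i) := by
        rw [sum_comm]; simp only [mul_sum]
    _ = _ := by
        rw [mul_sum, sum_filter]
        refine sum_congr rfl fun v _ => ?_
        simp only [AddChar.sum_mulShift _ hprim, neg_eq_zero]
        split_ifs <;> simp [mul_comm]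

def powerSumSolutions (F : Type*) [Field F] [Fintype F] [DecidableEq F] (d k : ℕ) :
    Finset (Fin k → F) :=
  {v | ∑ i, v i = 0 ∧ ∑ i, v i ^ d = 0}

theorem sum_sum_charSum_mul_pow_pow (hψ : ψ ≠ 1) (d k : ℕ) :
    ∑ b, ∑ a, charSum ψ (fun x => b * x ^ d) a ^ k =
      Fintype.card F ^ 2 * #(powerSumSolutions F d k) := by
  have hprim := AddChar.IsPrimitive.of_ne_one hψ
  calc ∑ b, ∑ a, charSum ψ (fun x => b * x ^ d) a ^ k
      = Fintype.card F * ∑ v : Fin k → F with ∑ i, v i = 0, ∑ b, ψ (b * ∑ i, v i ^ d) := by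
        simp only [sum_charSum_pow ψ hψ, ← mul_sum]
        rw [sum_comm]
    _ = Fintype.card F ^ 2 * #(powerSumSolutions F d k) := by
        simp only [AddChar.sum_mulShift _ hprim, Nat.cast_ite, Nat.cast_zero]
        rw [← sum_filter, sum_const, filter_filter, nsmul_eq_mul, powerSumSolutions]
        ring

theorem card_pow_four_add_mul_sum_charSum_pow_four (hψ : ψ ≠ 1) {d : ℕ} (hd : d ≠ 0)
    (hcop : d.Coprime (Fintype.card F - 1)) :
    (Fintype.card F : ℝ) ^ 4 + (Fintype.card F - 1) * ∑ a, charSum ψ (· ^ d) a ^ 4 =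
      Fintype.card F ^ 2 * #(powerSumSolutions F d 4) := by
  rw [← sum_sum_charSum_mul_pow_pow ψ hψ d 4,
    ← add_sum_erase _ (fun b => ∑ a, charSum ψ (fun x => b * x ^ d) a ^ 4) (mem_univ 0)]
  congr 1
  · simp [charSum_const_zero ψ hψ]
  · have hb : ∀ b ∈ univ.erase (0 : F),
        ∑ a, charSum ψ (fun x => b * x ^ d) a ^ 4 = ∑ a, charSum ψ (· ^ d) a ^ 4 := by
      intro b hb
      obtain ⟨c, rfl⟩ := (pow_bijective_of_coprime hd hcop).surjective b
      have hc : c ≠ 0 := by rintro rfl; simp [zero_pow hd] at hb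
      simpa [mul_pow] using sum_charSum_comp_mul_pow ψ (· ^ d) hc 4
    rw [sum_congr rfl hb, sum_const, card_erase_of_mem (mem_univ _), card_univ, nsmul_eq_mul,
      Nat.cast_pred Fintype.card_pos]

variable [CharP F 2]

theorem sum_charSum_sq (hψ : ψ ≠ 1) (f : F → F) :
    ∑ a, charSum ψ f a ^ 2 = Fintype.card F ^ 2 := by
  have hterm : ∀ v ∈ ({v | ∑ i, v i = 0} : Finset (Fin 2 → F)), ψ (∑ i, f (v i)) = 1 := by
    intro v hv
    rw [mem_filter, Fin.sum_univ_two, CharTwo.add_eq_zero] at hv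
    rw [Fin.sum_univ_two, hv.2, CharTwo.add_self_eq_zero, AddChar.map_zero_eq_one]
  have hcard : #({v | ∑ i, v i = 0} : Finset (Fin 2 → F)) = Fintype.card F := by
    refine card_nbij' (fun v => v 0) (fun x => ![x, x]) (by simp) ?_ ?_ ?_
    · simp [Set.MapsTo, CharTwo.add_self_eq_zero]
    · intro v hv
      replace hv : v 0 = v 1 := by simpa [Fin.sum_univ_two, CharTwo.add_eq_zero] using hv
      ext i; fin_cases i <;> simp [hv]
    · intro x _; rfl
  rw [sum_charSum_pow ψ hψ, sum_congr rfl hterm, sum_const, hcard, nsmul_one]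
  ring

theorem three_mul_card_sq_le_card_powerSumSolutions (d : ℕ) :
    3 * Fintype.card F ^ 2 ≤ #(powerSumSolutions F d 4) + 2 * Fintype.card F := by
  set A := univ.image fun p : F × F => ![p.1, p.1, p.2, p.2]
  set B := univ.image fun p : F × F => ![p.1, p.2, p.1, p.2]
  set C := univ.image fun p : F × F => ![p.1, p.2, p.2, p.1]
  set D := univ.image fun x : F => ![x, x, x, x]
  obtain ⟨hA, hB, hC⟩ : #A = Fintype.card F ^ 2 ∧ #B = Fintype.card F ^ 2 ∧
      #C = Fintype.card F ^ 2 := by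
    refine ⟨?_, ?_, ?_⟩ <;>
    · rw [card_image_of_injective, card_univ, Fintype.card_prod, sq]
      intro p p' h
      simp_all [funext_iff, Fin.forall_fin_succ, Prod.ext_iff]
  obtain ⟨hAB, hAC, hBC⟩ : A ∩ B ⊆ D ∧ A ∩ C ⊆ D ∧ B ∩ C ⊆ D := by
    refine ⟨?_, ?_, ?_⟩ <;>
    · simp only [A, B, C, D, subset_iff, mem_inter, mem_image, mem_univ, true_and]
      rintro _ ⟨⟨⟨x, y⟩, rfl⟩, ⟨x', y'⟩, h⟩
      simp [funext_iff, Fin.forall_fin_succ] at h ⊢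
      grind
  have hsub : A ∪ B ∪ C ⊆ powerSumSolutions F d 4 := by
    have h2 : (2 : F) = 0 := CharTwo.two_eq_zero
    refine union_subset (union_subset ?_ ?_) ?_ <;>
    · simp only [A, B, C, subset_iff, mem_image, mem_univ, true_and]
      rintro _ ⟨⟨x, y⟩, rfl⟩
      simp only [powerSumSolutions, mem_filter, mem_univ, true_and, Fin.sum_univ_four]
      constructor <;> simp <;>
        first | linear_combination (x + y) * h2 | linear_combination (x ^ d + y ^ d) * h2
  have := card_le_card hsub
  have := card_add_card_add_card_le_card_union_add hAB hAC hBC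
  have : #D ≤ Fintype.card F := card_image_le
  omega

theorem two_mul_card_pow_three_le_sum_charSum_pow_four (hψ : ψ ≠ 1) {d : ℕ} (hd : d ≠ 0)
    (hcop : d.Coprime (Fintype.card F - 1)) :
    2 * (Fintype.card F : ℝ) ^ 3 ≤ ∑ a, charSum ψ (· ^ d) a ^ 4 := by
  have hmoment := card_pow_four_add_mul_sum_charSum_pow_four ψ hψ hd hcop
  have hcount :
      3 * (Fintype.card F : ℝ) ^ 2 ≤ #(powerSumSolutions F d 4) + 2 * Fintype.card F := by
    exact_mod_cast three_mul_card_sq_le_card_powerSumSolutions d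
  have hq : (1 : ℝ) < Fintype.card F := by exact_mod_cast Fintype.one_lt_card
  have : (Fintype.card F - 1 : ℝ) * (2 * Fintype.card F ^ 3) ≤
      (Fintype.card F - 1) * ∑ a, charSum ψ (· ^ d) a ^ 4 := by
    nlinarith [mul_le_mul_of_nonneg_left hcount (sq_nonneg (Fintype.card F : ℝ))]
  exact le_of_mul_le_mul_left this (by linarith)

end CharSum

section TraceChar

variable (F : Type*) [Field F] [CharP F 2]
attribute [local instance] ZMod.algebra

noncomputable def traceChar : AddChar F ℝ :=
  (AddChar.zmodChar 2 (by norm_num : (-1 : ℝ) ^ 2 = 1)).compAddMonoidHom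
    (Algebra.trace (ZMod 2) F).toAddMonoidHom

theorem traceChar_apply (x : F) : traceChar F x = (-1) ^ (Algebra.trace (ZMod 2) F x).val := rfl

theorem traceChar_ne_one [Fintype F] : traceChar F ≠ 1 := by
  obtain ⟨b, hb⟩ := Algebra.trace_surjective (ZMod 2) F 1
  refine AddChar.ne_one_iff.2 ⟨b, ?_⟩
  rw [traceChar_apply, hb, ZMod.val_one]
  norm_num

theorem canonicalPsi_two_eq_traceChar [Fintype F] (x : F) :
    canonicalPsi F 2 x = traceChar F x := by
  rw [canonicalPsi, traceChar_apply, Complex.ofReal_pow, Complex.ofReal_neg, Complex.ofReal_one,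
    ← Complex.exp_pi_mul_I, ← Complex.exp_nat_mul]
  congr 1
  push_cast
  ring

theorem weilSum_two_eq_charSum [Fintype F] (d : ℕ) (a : F) :
    weilSum F 2 d a = charSum (traceChar F) (· ^ d) a := by
  simp only [weilSum, charSum, canonicalPsi_two_eq_traceChar, Complex.ofReal_sum]

end TraceChar

theorem exists_abs_weilSum_ge_sqrt_two_card_general (F : Type*) [Field F] [Fintype F] [CharP F 2]
    (d : ℕ) (hd : 0 < d) (hgcd : Nat.gcd d (Fintype.card F - 1) = 1) :
    ∃ a : F, a ≠ 0 ∧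
      Real.sqrt (2 * Fintype.card F) ≤ ‖weilSum F 2 d a‖ := by
  classical
  set ψ := traceChar F
  have hψ : ψ ≠ 1 := traceChar_ne_one F
  have hsq := sum_charSum_sq ψ hψ (· ^ d)
  have hfour := two_mul_card_pow_three_le_sum_charSum_pow_four ψ hψ hd.ne' hgcd
  have hq : (0 : ℝ) < Fintype.card F := by exact_mod_cast Fintype.card_pos
  obtain ⟨a, -, ha⟩ := exists_le_sq_of_mul_sum_sq_le_sum_pow_four univ (charSum ψ (· ^ d))
    (c := 2 * Fintype.card F) (by rw [hsq]; positivity) (by rw [hsq]; linarith)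
  refine ⟨a, ?_, ?_⟩
  · rintro rfl
    rw [charSum_zero_right_of_bijective ψ hψ (pow_bijective_of_coprime hd.ne' hgcd)] at ha
    linarith
  · rw [weilSum_two_eq_charSum, Complex.norm_real, Real.norm_eq_abs, ← Real.sqrt_sq_eq_abs]
    exact Real.sqrt_le_sqrt ha

/-- In characteristic `2` with `q = 2^n`, `n` odd, there is some nonzero `a ∈ F` such that
`|W_{F,d}(a)| ≥ √(2q)`. -/
theorem exists_abs_weilSum_ge_sqrt_two_card (F : Type*) [Field F] [Fintype F] [CharP F 2]
    (n : ℕ) (hn : Odd n) (hcard : Fintype.card F = 2 ^ n)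
    (d : ℕ) (hd : 0 < d) (hgcd : Nat.gcd d (Fintype.card F - 1) = 1) :
    ∃ a : F, a ≠ 0 ∧
      Real.sqrt (2 * Fintype.card F) ≤ ‖weilSum F 2 d a‖ :=
  exists_abs_weilSum_ge_sqrt_two_card_general F d hd hgcd
end

section
/- Let F be a finite field of order q and let d be an invertible exponent over F. For a ∈ F let M_a be the number of x ∈ F with x^d + (1−x)^d = a. Then: (i) Σ_{a ∈ F, a ≠ 0} W_{F,d}(a)^0 = q − 1; (ii) Σ_{a ∈ F, a ≠ 0} W_{F,d}(a) = q; (iii) Σ_{a ∈ F, a ≠ 0} W_{F,d}(a)² = q²; (iv) Σ_{a ∈ F, a ≠ 0} W_{F,d}(a)³ = q²·M_1; and (v) Σ_{a ∈ F, a ≠ 0} W_{F,d}(a)⁴ = q²·Σ_{a ∈ F, a ≠ 0} M_a². -/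
open scoped BigOperators

set_option linter.unusedSectionVars false
set_option linter.unusedVariables false
set_option maxHeartbeats 1000000

namespace WeilAux
open Finset

variable (F : Type*) [Field F] [Fintype F] [DecidableEq F]
variable (p : ℕ) [Fact p.Prime] [CharP F p] {d : ℕ}

noncomputable def psiA : AddChar F ℂ :=
  haveI : NeZero p := ⟨(Fact.out : p.Prime).ne_zero⟩
  letI : Algebra (ZMod p) F := ZMod.algebra F p
  (ZMod.stdAddChar (N := p)).compAddMonoidHom (Algebra.trace (ZMod p) F).toAddMonoidHom

lemma canonicalPsi_eq (x : F) : canonicalPsi F p x = psiA F p x := by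
  haveI : NeZero p := ⟨(Fact.out : p.Prime).ne_zero⟩
  letI : Algebra (ZMod p) F := ZMod.algebra F p
  rw [psiA, canonicalPsi, AddChar.compAddMonoidHom_apply, ZMod.stdAddChar_apply,
    ZMod.toCircle_apply]
  norm_num

lemma psiA_ne_one : psiA F p ≠ 1 := by
  haveI : NeZero p := ⟨(Fact.out : p.Prime).ne_zero⟩
  obtain rfl : p = ringChar F := (ringChar.eq F p).symm
  letI : Algebra (ZMod (ringChar F)) F := ZMod.algebra F (ringChar F)
  obtain ⟨b, hb⟩ := FiniteField.trace_to_zmod_nondegenerate F (a := (1:F)) one_ne_zero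
  rw [one_mul] at hb
  intro h
  apply hb
  have hb1 : psiA F (ringChar F) b = 1 := by rw [h]; rfl
  rw [psiA, AddChar.compAddMonoidHom_apply] at hb1
  have := ZMod.injective_stdAddChar (N := ringChar F)
    (a₁ := (Algebra.trace (ZMod (ringChar F)) F) b) (a₂ := 0)
  simp only [LinearMap.toAddMonoidHom_coe] at hb1
  exact this (by rw [hb1, AddChar.map_zero_eq_one])

lemma psiA_orth (b : F) :
    ∑ x : F, psiA F p (x * b) = if b = 0 then (Fintype.card F : ℂ) else 0 := by
  have := AddChar.sum_mulShift b (AddChar.IsPrimitive.of_ne_one (psiA_ne_one F p))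
  simpa using this

lemma orthC (c t : F) :
    ∑ a : F, psiA F p (c - a * t)
      = psiA F p c * (if t = 0 then (Fintype.card F : ℂ) else 0) := by
  have h : ∀ a : F, psiA F p (c - a * t) = psiA F p c * psiA F p (a * -t) := by
    intro a
    rw [← AddChar.map_add_eq_mul]
    congr 1; ring
  simp_rw [h, ← Finset.mul_sum, psiA_orth, neg_eq_zero]

lemma step {ι : Type*} [Fintype ι] (C t : ι → F) :
    ∑ a : F, ∑ z : ι, psiA F p (C z - a * t z)
      = ∑ z : ι, psiA F p (C z) * (if t z = 0 then (Fintype.card F : ℂ) else 0) := by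
  rw [Finset.sum_comm]
  exact Finset.sum_congr rfl fun z _ => orthC F p _ _

lemma weil_eq (d : ℕ) (a : F) : weilSum F p d a = ∑ x : F, psiA F p (x ^ d - a * x) := by
  unfold weilSum; simp_rw [canonicalPsi_eq]

lemma erase_sum (f : F → ℂ) : ∑ a ∈ Finset.univ.erase 0, f a = (∑ a : F, f a) - f 0 := by
  rw [← Finset.add_sum_erase _ f (mem_univ 0)]; ring

lemma filter_sum (f : F → ℂ) (h0 : f 0 = 0) :
    ∑ a ∈ Finset.univ.filter (fun a : F => a ≠ 0), f a = ∑ a : F, f a := by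
  rw [Finset.filter_ne', erase_sum, h0, sub_zero]

lemma pow_shift (hd : 0 < d) (hgcd : Nat.gcd d (Fintype.card F - 1) = 1) (c : F) :
    ∑ s ∈ Finset.univ.erase 0, psiA F p (s ^ d * c)
      = (if c = 0 then (Fintype.card F : ℂ) else 0) - 1 := by
  have hfull : ∑ s : F, psiA F p (s ^ d * c) = ∑ u : F, psiA F p (u * c) := by
    have hbij : Function.Bijective (fun x : F => x ^ d) := by
      refine Finite.injective_iff_bijective.mp ?_
      intro x y h
      simp only at h
      rcases eq_or_ne y 0 with rfl | hy
      · rw [zero_pow hd.ne'] at h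
        exact pow_eq_zero_iff hd.ne' |>.mp h
      rcases eq_or_ne x 0 with rfl | hx
      · rw [zero_pow hd.ne'] at h
        exact ((pow_eq_zero_iff hd.ne' |>.mp h.symm).symm ▸ rfl)
      have hu : (x * y⁻¹) ^ d = 1 := by
        rw [mul_pow, inv_pow, h, mul_inv_cancel₀ (pow_ne_zero _ hy)]
      have h1 : orderOf (x * y⁻¹) ∣ d := orderOf_dvd_of_pow_eq_one hu
      have h2 : orderOf (x * y⁻¹) ∣ Fintype.card F - 1 :=
        orderOf_dvd_of_pow_eq_one
          (FiniteField.pow_card_sub_one_eq_one _ (mul_ne_zero hx (inv_ne_zero hy)))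
      have hdvd : orderOf (x * y⁻¹) ∣ 1 := hgcd ▸ Nat.dvd_gcd h1 h2
      have : x * y⁻¹ = 1 := orderOf_eq_one_iff.mp (Nat.dvd_one.mp hdvd)
      field_simp at this
      exact this
    exact Fintype.sum_bijective _ hbij _ _ fun x => rfl
  rw [erase_sum, hfull, psiA_orth]
  simp [zero_pow hd.ne']


lemma pow_inj (hd : 0 < d) (hgcd : Nat.gcd d (Fintype.card F - 1) = 1) :
    Function.Injective (fun x : F => x ^ d) := by
  intro x y h
  simp only at h
  rcases eq_or_ne y 0 with rfl | hy
  · rw [zero_pow hd.ne'] at h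
    exact pow_eq_zero_iff hd.ne' |>.mp h
  rcases eq_or_ne x 0 with rfl | hx
  · rw [zero_pow hd.ne'] at h
    exact ((pow_eq_zero_iff hd.ne' |>.mp h.symm).symm ▸ rfl)
  have hu : (x * y⁻¹) ^ d = 1 := by
    rw [mul_pow, inv_pow, h, mul_inv_cancel₀ (pow_ne_zero _ hy)]
  have h1 : orderOf (x * y⁻¹) ∣ d := orderOf_dvd_of_pow_eq_one hu
  have h2 : orderOf (x * y⁻¹) ∣ Fintype.card F - 1 :=
    orderOf_dvd_of_pow_eq_one
      (FiniteField.pow_card_sub_one_eq_one _ (mul_ne_zero hx (inv_ne_zero hy)))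
  have hdvd : orderOf (x * y⁻¹) ∣ 1 := hgcd ▸ Nat.dvd_gcd h1 h2
  have : x * y⁻¹ = 1 := orderOf_eq_one_iff.mp (Nat.dvd_one.mp hdvd)
  field_simp at this
  exact this

lemma neg_pow_d (hgcd : Nat.gcd d (Fintype.card F - 1) = 1) (x : F) :
    (-x) ^ d = -(x ^ d) := by
  rcases eq_or_ne (ringChar F) 2 with h2 | h2
  · haveI : CharP F 2 := h2 ▸ ringChar.charP F
    rw [CharTwo.neg_eq, CharTwo.neg_eq]
  · have hodd : Odd d := by
      have hq : Odd (Fintype.card F) :=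
        Nat.odd_iff.mpr (FiniteField.odd_card_of_char_ne_two h2)
      have hq2 : 2 ∣ Fintype.card F - 1 := by
        obtain ⟨k, hk⟩ := hq
        omega
      rcases Nat.even_or_odd d with he | ho
      · exfalso
        have : 2 ∣ Nat.gcd d (Fintype.card F - 1) :=
          Nat.dvd_gcd (even_iff_two_dvd.mp he) hq2
        omega
      · exact ho
    exact Odd.neg_pow hodd x

lemma S1 (hd : 0 < d) :
    ∑ a : F, weilSum F p d a = (Fintype.card F : ℂ) := by
  simp_rw [weil_eq]
  rw [step F p (fun x : F => x ^ d) (fun x : F => x)]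
  simp_rw [mul_ite, mul_zero]
  rw [Finset.sum_ite_eq' Finset.univ (0:F)]
  simp [zero_pow hd.ne']

lemma weil_sq (a : F) : weilSum F p d a ^ 2
    = ∑ z : F × F, psiA F p ((z.1 ^ d + z.2 ^ d) - a * (z.1 + z.2)) := by
  rw [sq, weil_eq, Finset.sum_mul_sum]
  conv_rhs => rw [Fintype.sum_prod_type]
  refine Finset.sum_congr rfl fun x _ => Finset.sum_congr rfl fun y _ => ?_
  rw [← AddChar.map_add_eq_mul]
  congr 1; ring

lemma S2 (hd : 0 < d) (hgcd : Nat.gcd d (Fintype.card F - 1) = 1) :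
    ∑ a : F, weilSum F p d a ^ 2 = (Fintype.card F : ℂ) ^ 2 := by
  simp_rw [weil_sq]
  rw [step F p (fun z : F × F => z.1 ^ d + z.2 ^ d) (fun z : F × F => z.1 + z.2)]
  rw [Fintype.sum_prod_type_right]
  simp_rw [add_eq_zero_iff_eq_neg, mul_ite, mul_zero]
  simp only [Finset.sum_ite_eq' Finset.univ, Finset.mem_univ, if_true]
  simp_rw [neg_pow_d F hgcd, neg_add_cancel, AddChar.map_zero_eq_one, one_mul]
  rw [Finset.sum_const, Finset.card_univ, nsmul_eq_mul, sq]


lemma Tval (hd : 0 < d) (hgcd : Nat.gcd d (Fintype.card F - 1) = 1) :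
    ∑ y : F, ∑ w : F, psiA F p (y ^ d + w ^ d - (y + w) ^ d)
      = (Fintype.card F : ℂ)
        * ((Finset.univ.filter (fun t : F => t ^ d + (1 - t) ^ d = 1)).card : ℂ) := by
  have hy : ∀ y : F, ∑ w : F, psiA F p (y ^ d + w ^ d - (y + w) ^ d)
      = ∑ s : F, psiA F p (y ^ d + (s - y) ^ d - s ^ d) := by
    intro y
    refine Fintype.sum_equiv (Equiv.addLeft y) _ _ fun w => ?_
    simp [add_sub_cancel_left]
  simp_rw [hy]
  rw [Finset.sum_comm]
  rw [← Finset.add_sum_erase _ _ (Finset.mem_univ (0:F))]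
  have h0 : ∑ y : F, psiA F p (y ^ d + ((0:F) - y) ^ d - (0:F) ^ d)
      = (Fintype.card F : ℂ) := by
    have harg : ∀ y : F, y ^ d + ((0:F) - y) ^ d - (0:F) ^ d = 0 := by
      intro y; rw [zero_sub, neg_pow_d F hgcd, zero_pow hd.ne']; ring
    simp_rw [harg, AddChar.map_zero_eq_one, Finset.sum_const, Finset.card_univ,
      nsmul_eq_mul, mul_one]
  rw [h0]
  have hs : ∀ s ∈ Finset.univ.erase (0:F),
      ∑ y : F, psiA F p (y ^ d + (s - y) ^ d - s ^ d)
        = ∑ t : F, psiA F p (s ^ d * (t ^ d + (1 - t) ^ d - 1)) := by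
    intro s hs0
    have hsne : s ≠ 0 := Finset.ne_of_mem_erase hs0
    refine (Fintype.sum_equiv (Equiv.mulLeft₀ s hsne) _ _ fun t => ?_).symm
    simp only [Equiv.mulLeft₀_apply]
    congr 1; rw [mul_pow, show s - s * t = s * (1 - t) by ring, mul_pow]; ring
  rw [Finset.sum_congr rfl hs, Finset.sum_comm]
  simp_rw [pow_shift F p hd hgcd, Finset.sum_sub_distrib, Finset.sum_const,
    Finset.card_univ, nsmul_eq_mul, mul_one, sub_eq_zero]
  have hcount : ∑ t : F, (if t ^ d + (1 - t) ^ d = 1 then (Fintype.card F : ℂ) else 0)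
      = ((Finset.univ.filter (fun t : F => t ^ d + (1 - t) ^ d = 1)).card : ℂ)
        * (Fintype.card F : ℂ) := by
    rw [← Finset.sum_filter, Finset.sum_const, nsmul_eq_mul]
  rw [hcount]; ring

lemma weil_cube (a : F) : weilSum F p d a ^ 3
    = ∑ z : F × F × F,
        psiA F p ((z.1 ^ d + (z.2.1 ^ d + z.2.2 ^ d)) - a * (z.1 + (z.2.1 + z.2.2))) := by
  rw [show weilSum F p d a ^ 3 = weilSum F p d a * weilSum F p d a ^ 2 by ring,
    weil_sq, weil_eq, Finset.sum_mul_sum]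
  conv_rhs => rw [Fintype.sum_prod_type]
  refine Finset.sum_congr rfl fun x _ => Finset.sum_congr rfl fun z _ => ?_
  rw [← AddChar.map_add_eq_mul]
  congr 1; ring

lemma S3 (hd : 0 < d) (hgcd : Nat.gcd d (Fintype.card F - 1) = 1) :
    ∑ a : F, weilSum F p d a ^ 3
      = (Fintype.card F : ℂ) ^ 2
        * ((Finset.univ.filter (fun t : F => t ^ d + (1 - t) ^ d = 1)).card : ℂ) := by
  simp_rw [weil_cube]
  rw [step F p (fun z : F × F × F => z.1 ^ d + (z.2.1 ^ d + z.2.2 ^ d))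
    (fun z : F × F × F => z.1 + (z.2.1 + z.2.2))]
  rw [Fintype.sum_prod_type_right]
  simp_rw [add_eq_zero_iff_eq_neg, mul_ite, mul_zero]
  simp only [Finset.sum_ite_eq' Finset.univ, Finset.mem_univ, if_true]
  simp_rw [neg_pow_d F hgcd]
  have harg : ∀ z : F × F, -((z.1 + z.2) ^ d) + (z.1 ^ d + z.2 ^ d)
      = z.1 ^ d + z.2 ^ d - (z.1 + z.2) ^ d := fun z => by ring
  simp_rw [harg, ← Finset.sum_mul]
  rw [Fintype.sum_prod_type, Tval F p hd hgcd]
  ring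


lemma weil_quart (a : F) : weilSum F p d a ^ 4
    = ∑ z : F × F × F × F,
        psiA F p ((z.1 ^ d + (z.2.1 ^ d + (z.2.2.1 ^ d + z.2.2.2 ^ d)))
          - a * (z.1 + (z.2.1 + (z.2.2.1 + z.2.2.2)))) := by
  rw [show weilSum F p d a ^ 4 = weilSum F p d a * weilSum F p d a ^ 3 by ring,
    weil_cube, weil_eq, Finset.sum_mul_sum]
  conv_rhs => rw [Fintype.sum_prod_type]
  refine Finset.sum_congr rfl fun x _ => Finset.sum_congr rfl fun z _ => ?_
  rw [← AddChar.map_add_eq_mul]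
  congr 1; ring

lemma Uval (hd : 0 < d) (hgcd : Nat.gcd d (Fintype.card F - 1) = 1) :
    ∑ r : F × F × F,
        psiA F p (r.1 ^ d + (r.2.1 ^ d + r.2.2 ^ d) - (r.1 + (r.2.1 + r.2.2)) ^ d)
      = (Fintype.card F : ℂ) *
          ∑ a : F, ((Finset.univ.filter (fun t : F => t ^ d + (1 - t) ^ d = a)).card : ℂ) ^ 2 := by
  rw [Fintype.sum_prod_type]
  have h1 : ∀ x : F, ∑ yz : F × F,
      psiA F p (x ^ d + (yz.1 ^ d + yz.2 ^ d) - (x + (yz.1 + yz.2)) ^ d)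
      = ∑ x2 : F × F, psiA F p (x ^ d + ((x2.1 - x) ^ d + x2.2 ^ d) - (x2.1 + x2.2) ^ d) := by
    intro x
    refine Fintype.sum_equiv (Equiv.prodCongr (Equiv.addLeft x) (Equiv.refl F)) _ _ fun yz => ?_
    simp only [Equiv.prodCongr_apply, Equiv.coe_addLeft, Equiv.refl_apply, Prod.map]
    congr 2
    · rw [add_sub_cancel_left]
    · ring
  simp_rw [h1]
  have h2 : ∀ (x : F) (x2 : F × F),
      psiA F p (x ^ d + ((x2.1 - x) ^ d + x2.2 ^ d) - (x2.1 + x2.2) ^ d)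
      = psiA F p (x ^ d + (x2.1 - x) ^ d) * psiA F p (x2.2 ^ d - (x2.1 + x2.2) ^ d) := by
    intro x x2
    rw [← AddChar.map_add_eq_mul]
    congr 1; ring
  simp_rw [h2, Fintype.sum_prod_type]
  -- now : ∑ x ∑ s ∑ z, ψ(x^d + (s-x)^d) * ψ(z^d - (s+z)^d)
  simp_rw [← Finset.mul_sum]
  rw [Finset.sum_comm]
  simp_rw [← Finset.sum_mul]
  -- now : ∑ s, (∑ x, ψ(x^d + (s-x)^d)) * (∑ z, ψ(z^d - (s+z)^d))
  rw [← Finset.add_sum_erase _ _ (Finset.mem_univ (0:F))]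
  have hN0 : ∑ x : F, psiA F p (x ^ d + ((0:F) - x) ^ d) = (Fintype.card F : ℂ) := by
    have : ∀ x : F, x ^ d + ((0:F) - x) ^ d = 0 := fun x => by
      rw [zero_sub, neg_pow_d F hgcd]; ring
    simp only [this, AddChar.map_zero_eq_one, Finset.sum_const, Finset.card_univ,
      nsmul_eq_mul, mul_one]
  have hP0 : ∑ z : F, psiA F p (z ^ d - ((0:F) + z) ^ d) = (Fintype.card F : ℂ) := by
    simp [Finset.card_univ]
  rw [hN0, hP0]
  have hs : ∀ s ∈ Finset.univ.erase (0:F),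
      (∑ x : F, psiA F p (x ^ d + (s - x) ^ d)) * (∑ z : F, psiA F p (z ^ d - (s + z) ^ d))
      = ∑ w : F × F, psiA F p (s ^ d *
          ((w.1 ^ d + (1 - w.1) ^ d) - (w.2 ^ d + (1 - w.2) ^ d))) := by
    intro s hs0
    have hsne : s ≠ 0 := Finset.ne_of_mem_erase hs0
    have hN : ∑ x : F, psiA F p (x ^ d + (s - x) ^ d)
        = ∑ t : F, psiA F p (s ^ d * (t ^ d + (1 - t) ^ d)) := by
      refine (Fintype.sum_equiv (Equiv.mulLeft₀ s hsne) _ _ fun t => ?_).symm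
      simp only [Equiv.mulLeft₀_apply]
      congr 1
      rw [mul_pow, show s - s * t = s * (1 - t) by ring, mul_pow]; ring
    have hP : ∑ z : F, psiA F p (z ^ d - (s + z) ^ d)
        = ∑ u : F, psiA F p (-(s ^ d) * (u ^ d + (1 - u) ^ d)) := by
      refine (Fintype.sum_equiv (Equiv.mulLeft₀ (-s) (neg_ne_zero.mpr hsne)) _ _
        fun u => ?_).symm
      simp only [Equiv.mulLeft₀_apply]
      congr 1
      rw [show -s * u = -(s * u) by ring, neg_pow_d F hgcd, mul_pow,
        show s + -(s * u) = s * (1 - u) by ring, mul_pow]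
      ring
    rw [hN, hP, Finset.sum_mul_sum]
    conv_rhs => rw [Fintype.sum_prod_type]
    refine Finset.sum_congr rfl fun t _ => Finset.sum_congr rfl fun u _ => ?_
    rw [← AddChar.map_add_eq_mul]
    congr 1; ring
  rw [Finset.sum_congr rfl hs, Finset.sum_comm]
  simp_rw [pow_shift F p hd hgcd, Finset.sum_sub_distrib, Finset.sum_const,
    Finset.card_univ, Fintype.card_prod, nsmul_eq_mul, mul_one, sub_eq_zero]
  have hcount : ∑ w : F × F,
      (if w.1 ^ d + (1 - w.1) ^ d = w.2 ^ d + (1 - w.2) ^ d then (Fintype.card F : ℂ) else 0)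
      = (∑ a : F, ((Finset.univ.filter (fun t : F => t ^ d + (1 - t) ^ d = a)).card : ℂ) ^ 2)
          * (Fintype.card F : ℂ) := by
    rw [Fintype.sum_prod_type]
    have hinner : ∀ t : F,
        ∑ u : F, (if t ^ d + (1 - t) ^ d = u ^ d + (1 - u) ^ d then (Fintype.card F : ℂ) else 0)
        = ((Finset.univ.filter
            (fun u : F => t ^ d + (1 - t) ^ d = u ^ d + (1 - u) ^ d)).card : ℂ)
            * (Fintype.card F : ℂ) := by
      intro t
      rw [← Finset.sum_filter, Finset.sum_const, nsmul_eq_mul]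
    simp_rw [hinner, ← Finset.sum_mul]
    congr 1
    rw [← Finset.sum_fiberwise Finset.univ (fun t : F => t ^ d + (1 - t) ^ d)
      (fun t => ((Finset.univ.filter
          (fun u : F => t ^ d + (1 - t) ^ d = u ^ d + (1 - u) ^ d)).card : ℂ))]
    refine Finset.sum_congr rfl fun a _ => ?_
    have hK : ∀ t ∈ Finset.univ.filter (fun i : F => i ^ d + (1 - i) ^ d = a),
        ((Finset.univ.filter
            (fun u : F => t ^ d + (1 - t) ^ d = u ^ d + (1 - u) ^ d)).card : ℂ)
        = ((Finset.univ.filter (fun t : F => t ^ d + (1 - t) ^ d = a)).card : ℂ) := by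
      intro t ht
      have h2 := (Finset.mem_filter.mp ht).2
      congr 2
      ext u
      simp only [Finset.mem_filter, h2]
      exact and_congr_right fun _ => eq_comm
    rw [Finset.sum_congr rfl hK, Finset.sum_const, nsmul_eq_mul, sq]
  rw [hcount]
  push_cast
  ring

lemma S4 (hd : 0 < d) (hgcd : Nat.gcd d (Fintype.card F - 1) = 1) :
    ∑ a : F, weilSum F p d a ^ 4
      = (Fintype.card F : ℂ) ^ 2 *
          ∑ a : F, ((Finset.univ.filter (fun t : F => t ^ d + (1 - t) ^ d = a)).card : ℂ) ^ 2 := by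
  simp_rw [weil_quart]
  rw [step F p (fun z : F × F × F × F => z.1 ^ d + (z.2.1 ^ d + (z.2.2.1 ^ d + z.2.2.2 ^ d)))
    (fun z : F × F × F × F => z.1 + (z.2.1 + (z.2.2.1 + z.2.2.2)))]
  rw [Fintype.sum_prod_type_right]
  simp_rw [add_eq_zero_iff_eq_neg, mul_ite, mul_zero]
  simp only [Finset.sum_ite_eq' Finset.univ, Finset.mem_univ, if_true]
  simp_rw [neg_pow_d F hgcd]
  have harg : ∀ r : F × F × F, -((r.1 + (r.2.1 + r.2.2)) ^ d) + (r.1 ^ d + (r.2.1 ^ d + r.2.2 ^ d))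
      = r.1 ^ d + (r.2.1 ^ d + r.2.2 ^ d) - (r.1 + (r.2.1 + r.2.2)) ^ d := fun r => by ring
  simp_rw [harg, ← Finset.sum_mul]
  rw [Uval F p hd hgcd]
  ring


lemma weil_zero (hd : 0 < d) (hgcd : Nat.gcd d (Fintype.card F - 1) = 1) :
    weilSum F p d 0 = 0 := by
  rw [weil_eq]
  have h : ∀ x : F, x ^ d - (0:F) * x = x ^ d := fun x => by ring
  simp_rw [h]
  rw [Fintype.sum_bijective _ (Finite.injective_iff_bijective.mp (pow_inj F hd hgcd)) _
    (fun y : F => psiA F p y) (fun x => rfl)]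
  exact AddChar.sum_eq_zero_of_ne_one (psiA_ne_one F p)

lemma M_card (M : F → ℕ)
    (hM : ∀ a : F, M a = Set.ncard {x : F | x ^ d + (1 - x) ^ d = a}) (a : F) :
    M a = (Finset.univ.filter (fun t : F => t ^ d + (1 - t) ^ d = a)).card := by
  rw [hM a]
  have h : {x : F | x ^ d + (1 - x) ^ d = a}
      = ↑(Finset.univ.filter (fun t : F => t ^ d + (1 - t) ^ d = a)) := by
    ext t; simp
  rw [h, Set.ncard_coe_finset]

lemma K_zero (hd : 0 < d) (hgcd : Nat.gcd d (Fintype.card F - 1) = 1) :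
    (Finset.univ.filter (fun t : F => t ^ d + (1 - t) ^ d = 0)).card = 0 := by
  rw [Finset.card_eq_zero, Finset.filter_eq_empty_iff]
  intro t _
  intro h
  have h1 : t ^ d = (t - 1) ^ d := by
    rw [show t - 1 = -(1 - t) by ring, neg_pow_d F hgcd]
    linear_combination h
  have h2 := pow_inj F hd hgcd h1
  have h3 : (1:F) = 0 := by linear_combination h2
  exact one_ne_zero h3

end WeilAux

open WeilAux in
/-- The first few power moments of `W_{F,d}`, where `M_a = #{x ∈ F : x^d + (1−x)^d = a}`. -/
theorem weilSum_power_moments (F : Type*) [Field F] [Fintype F] [DecidableEq F]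
    (p : ℕ) [Fact p.Prime] [CharP F p] (d : ℕ) (hd : 0 < d)
    (hgcd : Nat.gcd d (Fintype.card F - 1) = 1)
    (M : F → ℕ) (hM : ∀ a : F, M a = Set.ncard {x : F | x ^ d + (1 - x) ^ d = a}) :
    (∑ a ∈ Finset.univ.filter (fun a : F => a ≠ 0), weilSum F p d a ^ 0
        = (Fintype.card F : ℂ) - 1) ∧
    (∑ a ∈ Finset.univ.filter (fun a : F => a ≠ 0), weilSum F p d a ^ 1
        = (Fintype.card F : ℂ)) ∧
    (∑ a ∈ Finset.univ.filter (fun a : F => a ≠ 0), weilSum F p d a ^ 2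
        = (Fintype.card F : ℂ) ^ 2) ∧
    (∑ a ∈ Finset.univ.filter (fun a : F => a ≠ 0), weilSum F p d a ^ 3
        = (Fintype.card F : ℂ) ^ 2 * (M 1 : ℂ)) ∧
    (∑ a ∈ Finset.univ.filter (fun a : F => a ≠ 0), weilSum F p d a ^ 4
        = (Fintype.card F : ℂ) ^ 2 *
            ∑ a ∈ Finset.univ.filter (fun a : F => a ≠ 0), (M a : ℂ) ^ 2) := by
  have hW0 : weilSum F p d 0 = 0 := weil_zero F p hd hgcd
  have hcast : (1 : ℕ) ≤ Fintype.card F := Fintype.card_pos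
  refine ⟨?_, ?_, ?_, ?_, ?_⟩
  · simp only [pow_zero]
    rw [Finset.sum_const, Finset.filter_ne', Finset.card_erase_of_mem (Finset.mem_univ 0),
      Finset.card_univ, nsmul_eq_mul, mul_one, Nat.cast_sub hcast, Nat.cast_one]
  · rw [filter_sum F (fun a => weilSum F p d a ^ 1) (by simp [hW0])]
    simp_rw [pow_one]
    exact S1 F p hd
  · rw [filter_sum F (fun a => weilSum F p d a ^ 2) (by simp [hW0])]
    exact S2 F p hd hgcd
  · rw [filter_sum F (fun a => weilSum F p d a ^ 3) (by simp [hW0]), S3 F p hd hgcd,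
      M_card F M hM 1]
  · rw [filter_sum F (fun a => weilSum F p d a ^ 4) (by simp [hW0]), S4 F p hd hgcd]
    congr 1
    rw [← filter_sum F (fun a =>
        ((Finset.univ.filter (fun t : F => t ^ d + (1 - t) ^ d = a)).card : ℂ) ^ 2)
      (by simp [K_zero F hd hgcd])]
    refine Finset.sum_congr rfl fun a _ => ?_
    rw [M_card F M hM a]
end
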